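/- The unique positive definite fixed points of the maps u ↦ ϖ + (I+u)^{-1} u and v ↦ (I + (ϖ+v)^{-1})^{-1} are u_∞ = ϖ/2 + (ϖ + (ϖ/2)^2)^{1/2} and r_∞ = -ϖ/2 + (ϖ + (ϖ/2)^2)^{1/2}, respectively, and they satisfy r_∞ = (I + u_∞^{-1})^{-1} and u_∞ = r_∞ + ϖ. -/

import Mathlib

open Matrix
open scoped Classical

/-- The principal symmetric positive semidefinite square root of a matrix
(junk value `0` if the matrix is not positive semidefinite). -/
noncomputable def psqrt {d : ℕ} (A : Matrix (Fin d) (Fin d) ℝ) : Matrix (Fin d) (Fin d) ℝ :=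
  if h : A.PosSemidef then
    h.1.eigenvectorUnitary.1 * diagonal ((↑) ∘ (√·) ∘ h.1.eigenvalues) *
      (star h.1.eigenvectorUnitary : Matrix (Fin d) (Fin d) ℝ)
  else 0

/-!
For a symmetric `u`, the fixed-point equation `u = ϖ + (1 + u)⁻¹ u` is the quadratic
`(1 + u) (u - ϖ) = u`, i.e. `u² - u ϖ = ϖ`. Taking transposes shows that `u` commutes with `ϖ`, and
completing the square turns the quadratic into `(u - ϖ/2)² = ϖ + (ϖ/2)²`. For positive definite
`u` the matrix `u - ϖ = (1 + u⁻¹)⁻¹` is positive definite, so `u - ϖ/2` is a positive semidefinite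
square root, hence the principal one. Conversely `ϖ/2 + (ϖ + (ϖ/2)²)^{1/2}` commutes with `ϖ` and
solves the quadratic. Since `(1 + u⁻¹)⁻¹ = (1 + u)⁻¹ u`, `v` is a fixed point of the second map
exactly when `ϖ + v` is one of the first.
-/

open scoped MatrixOrder ComplexOrder

section Ring

variable {A : Type*} [Ring A]

theorem Commute.of_one_add_mul_sub_eq [StarRing A] {u w : A} (hu : IsSelfAdjoint u)
    (hw : IsSelfAdjoint w) (h : (1 + u) * (u - w) = u) : Commute u w := by
  have hstar : (u - w) * (1 + u) = u := by
    simpa [hu.star_eq, hw.star_eq] using congrArg star h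
  have e1 : (1 + u) * (u - w) = (u - w) + (u * u - u * w) := by noncomm_ring
  have e2 : (u - w) * (1 + u) = (u - w) + (u * u - w * u) := by noncomm_ring
  have h' := h.trans hstar.symm
  rw [e1, e2] at h'
  exact sub_right_injective (add_left_cancel h')

theorem one_add_mul_sub_eq_self_iff [Algebra ℝ A] {u w : A} (h : Commute u w) :
    (1 + u) * (u - w) = u ↔
      (u - (1/2 : ℝ) • w) * (u - (1/2 : ℝ) • w) = w + ((1/2 : ℝ) • w) * ((1/2 : ℝ) • w) := by
  have e1 : (1 + u) * (u - w) = u + (u * u - u * w - w) := by noncomm_ring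
  have e2 : (u - (1/2 : ℝ) • w) * (u - (1/2 : ℝ) • w) =
      w + ((1/2 : ℝ) • w) * ((1/2 : ℝ) • w) + (u * u - u * w - w) := by
    simp only [sub_mul, mul_sub, smul_mul_assoc, mul_smul_comm, smul_smul, h.eq]
    module
  rw [e1, e2, add_eq_left, add_eq_left]

end Ring

namespace Matrix

variable {n : Type*} [Fintype n] [DecidableEq n]

theorem inv_one_add_inv {R : Type*} [CommRing R] {A : Matrix n n R} (hA : IsUnit A.det) :
    (1 + A⁻¹)⁻¹ = (1 + A)⁻¹ * A := by
  have hfac : 1 + A⁻¹ = A⁻¹ * (1 + A) := by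
    rw [mul_add, mul_one, nonsing_inv_mul _ hA, add_comm]
  rw [hfac, mul_inv_rev, nonsing_inv_nonsing_inv _ hA]

theorem eq_add_inv_one_add_mul_iff {R : Type*} [CommRing R] {u w : Matrix n n R}
    (hu : IsUnit (1 + u).det) : u = w + (1 + u)⁻¹ * u ↔ (1 + u) * (u - w) = u := by
  have := invertibleOfIsUnitDet (1 + u) hu
  rw [← sub_eq_iff_eq_add', eq_comm, inv_mul_eq_iff_eq_mul_of_invertible]
  exact eq_comm

theorem sub_eq_inv_one_add_inv_of_eq_add_inv_one_add_mul {R : Type*} [CommRing R]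
    {u w : Matrix n n R} (hu : IsUnit u.det) (h : u = w + (1 + u)⁻¹ * u) :
    u - w = (1 + u⁻¹)⁻¹ := by
  rw [inv_one_add_inv hu]
  exact sub_eq_of_eq_add' h

theorem PosDef.inv_one_add_inv {𝕜 : Type*} [RCLike 𝕜] {A : Matrix n n 𝕜} (hA : A.PosDef) :
    (1 + A⁻¹)⁻¹.PosDef :=
  (PosDef.one.add hA.inv).inv

end Matrix

section psqrt

variable {d : ℕ} {A : Matrix (Fin d) (Fin d) ℝ}

theorem psqrt_eq_sqrt (hA : A.PosSemidef) : psqrt A = CFC.sqrt A := by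
  rw [CFC.sqrt_eq_real_sqrt A hA.nonneg, cfcₙ_eq_cfc, hA.1.cfc_eq, psqrt, dif_pos hA,
    IsHermitian.cfc, Unitary.conjStarAlgAut_apply]
  rfl

theorem posSemidef_psqrt (hA : A.PosSemidef) : (psqrt A).PosSemidef := by
  rw [psqrt_eq_sqrt hA]
  exact (CFC.sqrt_nonneg A).posSemidef

theorem psqrt_mul_self (hA : A.PosSemidef) : psqrt A * psqrt A = A := by
  rw [psqrt_eq_sqrt hA, CFC.sqrt_mul_sqrt_self A hA.nonneg]

theorem psqrt_eq_of_mul_self {X : Matrix (Fin d) (Fin d) ℝ} (hX : X.PosSemidef) (h : X * X = A) :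
    psqrt A = X := by
  have hA : A.PosSemidef := h ▸ hX.1.isSelfAdjoint.mul_self_nonneg.posSemidef
  rw [psqrt_eq_sqrt hA, CFC.sqrt_unique h hX.nonneg]

theorem Commute.psqrt_left {B : Matrix (Fin d) (Fin d) ℝ} (h : Commute A B) :
    Commute (psqrt A) B := by
  by_cases hA : A.PosSemidef
  · rw [psqrt_eq_sqrt hA]
    exact h.cfcₙ_nnreal _
  · simp [psqrt, dif_neg hA]

end psqrt

section Riccati

variable {d : ℕ} {ϖ : Matrix (Fin d) (Fin d) ℝ}

theorem posDef_and_eq_add_inv_one_add_mul_iff (hϖ : ϖ.PosDef) {u : Matrix (Fin d) (Fin d) ℝ} :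
    u.PosDef ∧ u = ϖ + (1 + u)⁻¹ * u ↔
      u = (1/2 : ℝ) • ϖ + psqrt (ϖ + ((1/2 : ℝ) • ϖ) * ((1/2 : ℝ) • ϖ)) := by
  have hhalf : ((1/2 : ℝ) • ϖ).PosDef := hϖ.smul (by norm_num)
  have hB : (ϖ + ((1/2 : ℝ) • ϖ) * ((1/2 : ℝ) • ϖ)).PosSemidef :=
    hϖ.posSemidef.add hhalf.1.isSelfAdjoint.mul_self_nonneg.posSemidef
  have hunit {u : Matrix (Fin d) (Fin d) ℝ} (hu : u.PosDef) : IsUnit (1 + u).det :=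
    (PosDef.one.add hu).det_pos.ne'.isUnit
  constructor
  · rintro ⟨hu, hfix⟩
    have hq := (eq_add_inv_one_add_mul_iff (hunit hu)).1 hfix
    have hc := Commute.of_one_add_mul_sub_eq hu.1.isSelfAdjoint hϖ.1.isSelfAdjoint hq
    have hsq := (one_add_mul_sub_eq_self_iff hc).1 hq
    have hpsd : (u - (1/2 : ℝ) • ϖ).PosSemidef := by
      have : u - (1/2 : ℝ) • ϖ = (1 + u⁻¹)⁻¹ + (1/2 : ℝ) • ϖ := by
        rw [← sub_eq_inv_one_add_inv_of_eq_add_inv_one_add_mul hu.det_pos.ne'.isUnit hfix]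
        module
      rw [this]
      exact (hu.inv_one_add_inv.add hhalf).posSemidef
    rw [psqrt_eq_of_mul_self hpsd hsq, add_sub_cancel]
  · rintro rfl
    have hu := hhalf.add_posSemidef (posSemidef_psqrt hB)
    refine ⟨hu, (eq_add_inv_one_add_mul_iff (hunit hu)).2 ((one_add_mul_sub_eq_self_iff ?_).2 ?_)⟩
    · have hhalfϖ : Commute ((1/2 : ℝ) • ϖ) ϖ := (Commute.refl ϖ).smul_left _
      have hBϖ : Commute (ϖ + ((1/2 : ℝ) • ϖ) * ((1/2 : ℝ) • ϖ)) ϖ :=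
        (Commute.refl ϖ).add_left (hhalfϖ.mul_left hhalfϖ)
      exact hhalfϖ.add_left hBϖ.psqrt_left
    · rw [add_sub_cancel_left, psqrt_mul_self hB]

end Riccati

/-- The unique positive definite fixed points of the maps `u ↦ ϖ + (I+u)⁻¹ u` and
`v ↦ (I + (ϖ+v)⁻¹)⁻¹` are `u_∞ = ϖ/2 + (ϖ + (ϖ/2)²)^{1/2}` and
`r_∞ = -ϖ/2 + (ϖ + (ϖ/2)²)^{1/2}`, respectively, and they satisfy
`r_∞ = (I + u_∞⁻¹)⁻¹` and `u_∞ = r_∞ + ϖ`. -/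
theorem riccati_fixed_points {d : ℕ} (ϖ uinf rinf : Matrix (Fin d) (Fin d) ℝ)
    (hϖ : ϖ.PosDef)
    (hu : uinf = ((1/2 : ℝ)) • ϖ + psqrt (ϖ + ((1/2 : ℝ) • ϖ) * ((1/2 : ℝ) • ϖ)))
    (hrm : rinf = (-(1/2 : ℝ)) • ϖ + psqrt (ϖ + ((1/2 : ℝ) • ϖ) * ((1/2 : ℝ) • ϖ))) :
    uinf.PosDef ∧
    uinf = ϖ + (1 + uinf)⁻¹ * uinf ∧
    (∀ u : Matrix (Fin d) (Fin d) ℝ, u.PosDef → u = ϖ + (1 + u)⁻¹ * u → u = uinf) ∧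
    rinf.PosDef ∧
    rinf = (1 + (ϖ + rinf)⁻¹)⁻¹ ∧
    (∀ v : Matrix (Fin d) (Fin d) ℝ, v.PosDef → v = (1 + (ϖ + v)⁻¹)⁻¹ → v = rinf) ∧
    rinf = (1 + uinf⁻¹)⁻¹ ∧
    uinf = rinf + ϖ := by
  obtain ⟨hupd, hufix⟩ := (posDef_and_eq_add_inv_one_add_mul_iff hϖ).2 hu
  have huniq (u : Matrix (Fin d) (Fin d) ℝ) (hpd : u.PosDef) (hfix : u = ϖ + (1 + u)⁻¹ * u) :
      u = uinf :=
    ((posDef_and_eq_add_inv_one_add_mul_iff hϖ).1 ⟨hpd, hfix⟩).trans hu.symm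
  have hru : rinf = uinf - ϖ := by
    rw [hu, hrm]
    module
  have hrinv : rinf = (1 + uinf⁻¹)⁻¹ :=
    hru.trans (sub_eq_inv_one_add_inv_of_eq_add_inv_one_add_mul hupd.det_pos.ne'.isUnit hufix)
  have hur : uinf = rinf + ϖ := by rw [hru, sub_add_cancel]
  refine ⟨hupd, hufix, huniq, hrinv ▸ hupd.inv_one_add_inv, ?_, ?_, hrinv, hur⟩
  · rwa [add_comm ϖ, ← hur]
  · intro v hv hfix
    have hϖv : (ϖ + v).PosDef := hϖ.add hv
    have : ϖ + v = uinf := huniq _ hϖv <| by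
      rw [← inv_one_add_inv hϖv.det_pos.ne'.isUnit, ← hfix]
    rw [hru, ← this, add_sub_cancel_left]
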